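/- If q is a proper quadratic refinement of a symmetric bilinear form on a finite-dimensional Z/2Z-vector space V, then the Gauss sum Σ_{v ∈ V} i^{q(v)} has absolute value √2^{dim V + dim rad}, where rad is the radical of the form and q vanishes on rad. In particular the Gauss sum is nonzero, so the Brown invariant β(q) ∈ Z/8Z is well defined. -/

import Mathlib

/-- The nontrivial homomorphism `Z/2 → Z/4` sending 1 to 2. -/
def iota (a : ZMod 2) : ZMod 4 := 2 * (a.val : ZMod 4)

/-!
Write `S = ∑ v, i ^ q v`. Substituting `v = u + w` in `S * conj S = ∑ v w, i ^ (q v - q w)` and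
using `q (u + w) - q w = q u + ι (B u w)` gives `∑ u, i ^ q u * ∑ w, (-1) ^ B u w`. The inner sum
is a character sum over `V`: it is `|V|` if `u ∈ ker B` and `0` otherwise. Since `q` vanishes on
`ker B`, `|S| ^ 2 = |V| * |ker B| = 2 ^ (dim V + dim ker B)`.
-/

open Complex ComplexConjugate

lemma iota_add (a b : ZMod 2) : iota (a + b) = iota a + iota b := by
  revert a b; decide

def iotaAddMonoidHom : ZMod 2 →+ ZMod 4 := AddMonoidHom.mk' iota iota_add

noncomputable def powIChar : AddChar (ZMod 4) ℂ := AddChar.zmodChar 4 I_pow_four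

lemma powIChar_apply (a : ZMod 4) : powIChar a = I ^ a.val := rfl

lemma powIChar_iota_eq_one_iff (b : ZMod 2) : powIChar (iota b) = 1 ↔ b = 0 := by
  rcases (by decide : ∀ c : ZMod 2, c = 0 ∨ c = 1) b with rfl | rfl
  · simp [iota]
  · rw [show iota 1 = 2 from rfl, powIChar_apply, show (2 : ZMod 4).val = 2 from rfl, I_sq]
    norm_num

lemma sum_powIChar_iota {V : Type*} [AddCommGroup V] [Fintype V] [DecidableEq (V →+ ZMod 2)]
    (f : V →+ ZMod 2) :
    ∑ w, powIChar (iota (f w)) = if f = 0 then (Fintype.card V : ℂ) else 0 := by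
  have hψ : powIChar.compAddMonoidHom (iotaAddMonoidHom.comp f) = 0 ↔ f = 0 := by
    simp only [DFunLike.ext_iff, AddMonoidHom.zero_apply]
    exact forall_congr' fun w ↦ powIChar_iota_eq_one_iff (f w)
  convert AddChar.sum_eq_ite (powIChar.compAddMonoidHom (iotaAddMonoidHom.comp f)) using 2
  · rfl
  · exact hψ.symm

lemma card_eq_two_pow_finrank (W : Type*) [AddCommGroup W] [Module (ZMod 2) W] [Fintype W] :
    Fintype.card W = 2 ^ Module.finrank (ZMod 2) W := by
  rw [Module.card_eq_pow_finrank (K := ZMod 2), ZMod.card]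

section GaussSum

variable {V : Type*} [AddCommGroup V] [Module (ZMod 2) V] [Fintype V]
  {B : V →ₗ[ZMod 2] V →ₗ[ZMod 2] ZMod 2} {q : V → ZMod 4}

theorem gaussSum_mul_conj [Fintype (LinearMap.ker B)]
    (hq : ∀ x y, q (x + y) - q x - q y = iota (B x y)) :
    (∑ v, powIChar (q v)) * conj (∑ v, powIChar (q v)) =
      Fintype.card V * ∑ u : LinearMap.ker B, powIChar (q u) := by
  classical
  have hshift (u w : V) : q (u + w) - q w = q u + iota (B u w) := by
    linear_combination hq u w
  calc (∑ v, powIChar (q v)) * conj (∑ v, powIChar (q v))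
      = ∑ w, ∑ v, powIChar (q v - q w) := by
        simp only [map_sum, Finset.sum_mul_sum, sub_eq_add_neg, AddChar.map_add_eq_mul,
          AddChar.map_neg_eq_conj]
        exact Finset.sum_comm
    _ = ∑ w, ∑ u, powIChar (q u) * powIChar (iota (B u w)) := by
        refine Fintype.sum_congr _ _ fun w ↦ ?_
        refine (Fintype.sum_equiv (Equiv.addRight w) _ _ fun u ↦ ?_).symm
        rw [Equiv.coe_addRight, hshift, AddChar.map_add_eq_mul]
    _ = ∑ u, powIChar (q u) * if B u = 0 then (Fintype.card V : ℂ) else 0 := by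
        rw [Finset.sum_comm]
        refine Fintype.sum_congr _ _ fun u ↦ ?_
        rw [← Finset.mul_sum]
        congr 1
        convert sum_powIChar_iota (B u).toAddMonoidHom using 2
        · rfl
        · exact (LinearMap.toAddMonoidHom_injective.eq_iff (a := B u) (b := 0)).symm
    _ = Fintype.card V * ∑ u : LinearMap.ker B, powIChar (q u) := by
        simp only [mul_ite, mul_zero]
        rw [← Finset.sum_filter, ← Finset.sum_mul,
          Finset.sum_subtype (p := (· ∈ LinearMap.ker B)) _ (by simp), mul_comm]

theorem norm_gaussSum_sq (hq : ∀ x y, q (x + y) - q x - q y = iota (B x y))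
    (hproper : ∀ x ∈ LinearMap.ker B, q x = 0) :
    ‖∑ v, I ^ (q v).val‖ ^ 2 =
      2 ^ (Module.finrank (ZMod 2) V + Module.finrank (ZMod 2) (LinearMap.ker B)) := by
  classical
  have h := gaussSum_mul_conj hq
  simp only [fun u : LinearMap.ker B ↦ hproper u u.2, AddChar.map_zero_eq_one,
    Finset.sum_const, Finset.card_univ, nsmul_one, mul_conj', card_eq_two_pow_finrank,
    powIChar_apply] at h
  rw [pow_add]
  exact_mod_cast h

end GaussSum

theorem stmt15_general {V : Type*} [AddCommGroup V] [Module (ZMod 2) V] [Fintype V]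
    (B : V →ₗ[ZMod 2] V →ₗ[ZMod 2] ZMod 2)
    (q : V → ZMod 4)
    (hq : ∀ x y, q (x + y) - q x - q y = iota (B x y))
    (hproper : ∀ x ∈ LinearMap.ker B, q x = 0) :
    ‖(∑ v : V, I ^ (q v).val)‖ =
      Real.sqrt 2 ^ (Module.finrank (ZMod 2) V +
        Module.finrank (ZMod 2) (LinearMap.ker B)) ∧
    (∑ v : V, I ^ (q v).val) ≠ 0 := by
  have hnorm : ‖∑ v : V, I ^ (q v).val‖ = Real.sqrt 2 ^ (Module.finrank (ZMod 2) V +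
      Module.finrank (ZMod 2) (LinearMap.ker B)) := by
    rw [← pow_left_inj₀ (norm_nonneg _) (by positivity) two_ne_zero, norm_gaussSum_sq hq hproper,
      ← pow_mul, mul_comm, pow_mul, Real.sq_sqrt zero_le_two]
  exact ⟨hnorm, norm_ne_zero_iff.mp (by rw [hnorm]; positivity)⟩

open Complex in
/-- The Gauss sum of a proper quadratic refinement `q` of a symmetric bilinear form
`B` on a finite-dimensional `Z/2`-vector space has absolute value
`√2 ^ (dim V + dim rad)`; in particular it is nonzero, so the Brown invariant is
well defined. -/
theorem stmt15 {V : Type*} [AddCommGroup V] [Module (ZMod 2) V] [Fintype V]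
    (B : V →ₗ[ZMod 2] V →ₗ[ZMod 2] ZMod 2)
    (hBsymm : ∀ x y, B x y = B y x)
    (q : V → ZMod 4)
    (hq : ∀ x y, q (x + y) - q x - q y = iota (B x y))
    (hproper : ∀ x ∈ LinearMap.ker B, q x = 0) :
    ‖(∑ v : V, I ^ (q v).val)‖ =
      Real.sqrt 2 ^ (Module.finrank (ZMod 2) V +
        Module.finrank (ZMod 2) (LinearMap.ker B)) ∧
    (∑ v : V, I ^ (q v).val) ≠ 0 :=
  stmt15_general B q hq hproper
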